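/- arXiv:1203.6874 — 5 statements merged into one kernel-verified Lean document; each statement's English description precedes it below -/
import Mathlib

section
/- Let X be a set and let T and T' be two Polish topologies on X with T ⊆ T' (every T-open set is T'-open). Then the Borel σ-algebra generated by T' is equal to the Borel σ-algebra generated by T. -/
/-- Two comparable Polish topologies on the same set generate the same Borel σ-algebra. -/
theorem stmt4 {X : Type*} (t t' : TopologicalSpace X)
    (ht : @PolishSpace X t) (ht' : @PolishSpace X t')
    (h : t' ≤ t) :
    @borel X t' = @borel X t := by
  exact MeasureTheory.borel_eq_borel_of_le ht' ht h
end

section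
/- Let (X, d) be a complete separable metric space whose topology is zero-dimensional (the clopen sets form a basis for the topology) and such that d(x, y) ≤ 1 for all x, y ∈ X. Then there exists a family (A_s) of subsets of X indexed by finite sequences s of natural numbers such that: (1) each A_s is clopen; (2) A_∅ = X where ∅ is the empty sequence; (3) for every s, A_s is the union over n ∈ ℕ of the sets A_{s⌢n} (where s⌢n denotes s extended by n); (4) for every s and all n ≠ m, A_{s⌢n} ∩ A_{s⌢m} = ∅; and (5) for every nonempty sequence s, the diameter of A_s is at most 2^{-length(s)}. -/
/-!
Every clopen set `B` of a separable zero-dimensional metric space is covered by clopen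
subsets of diameter at most `ε`; by Lindelöf countably many suffice, and disjointifying
that sequence keeps the pieces clopen. Splitting `A s` in this way with `ε = 2 ^ -(|s| + 1)`
and recursing along `s` produces the scheme.
-/

open Function Metric Set TopologicalSpace

theorem IsClopen.disjointed {X ι : Type*} [TopologicalSpace X] [Preorder ι]
    [LocallyFiniteOrderBot ι] {f : ι → Set X} (hf : ∀ i, IsClopen (f i)) (i : ι) :
    IsClopen (disjointed f i) := by
  rw [disjointed_eq_inter_compl]
  exact (hf i).inter ((finite_Iio i).isClopen_biInter fun j _ => (hf j).compl)

section ZeroDimensional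

variable {X : Type*} [PseudoMetricSpace X] [SeparableSpace X]

theorem exists_seq_isClopen_iUnion_eq_dist_le
    (hzd : IsTopologicalBasis {U : Set X | IsClopen U}) {B : Set X} (hB : IsOpen B)
    {ε : ℝ} (hε : 0 < ε) :
    ∃ g : ℕ → Set X, (∀ n, IsClopen (g n)) ∧ ⋃ n, g n = B ∧
      ∀ n, ∀ x ∈ g n, ∀ y ∈ g n, dist x y ≤ ε := by
  have := UniformSpace.secondCountable_of_separable X
  set S := {U : Set X | IsClopen U ∧ U ⊆ B ∧ ∀ x ∈ U, ∀ y ∈ U, dist x y ≤ ε}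
  have hS : ⋃₀ S = B := by
    refine subset_antisymm (sUnion_subset fun U hU => hU.2.1) fun x hx => ?_
    obtain ⟨U, hU, hxU, hUB⟩ := hzd.exists_subset_of_mem_open
      (⟨hx, mem_ball_self (half_pos hε)⟩ : x ∈ B ∩ ball x (ε / 2)) (hB.inter isOpen_ball)
    refine ⟨U, ⟨hU, fun y hy => (hUB hy).1, fun y hy z hz => ?_⟩, hxU⟩
    calc dist y z ≤ dist y x + dist x z := dist_triangle y x z
      _ ≤ ε / 2 + ε / 2 := by
          gcongr
          · exact (mem_ball.1 (hUB hy).2).le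
          · exact (mem_ball'.1 (hUB hz).2).le
      _ = ε := add_halves ε
  obtain ⟨T, hTc, hTS, hTU⟩ := isOpen_sUnion_countable S fun U hU => hU.1.isOpen
  -- `∅ ∈ S` is added so that the countable subcover can be enumerated even when `B = ∅`.
  obtain ⟨g, hg⟩ := (hTc.insert ∅).exists_eq_range (insert_nonempty _ _)
  have hgS : ∀ n, g n ∈ S := by
    intro n
    rcases (hg ▸ mem_range_self n : g n ∈ insert ∅ T) with h | h
    · exact h ▸ ⟨isClopen_empty, empty_subset B, by simp⟩
    · exact hTS h
  refine ⟨g, fun n => (hgS n).1, ?_, fun n => (hgS n).2.2⟩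
  rw [← sUnion_range, ← hg, sUnion_insert, empty_union, hTU, hS]

theorem exists_clopen_partition_diam_le
    (hzd : IsTopologicalBasis {U : Set X | IsClopen U}) {B : Set X} (hB : IsOpen B)
    {ε : ℝ} (hε : 0 < ε) :
    ∃ f : ℕ → Set X, (∀ n, IsClopen (f n)) ∧ ⋃ n, f n = B ∧
      Pairwise (Disjoint on f) ∧ ∀ n, diam (f n) ≤ ε := by
  obtain ⟨g, hg, hgB, hgd⟩ := exists_seq_isClopen_iUnion_eq_dist_le hzd hB hε
  refine ⟨disjointed g, IsClopen.disjointed hg, iUnion_disjointed.trans hgB,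
    disjoint_disjointed g, fun n => diam_le_of_forall_dist_le hε.le fun x hx y hy => ?_⟩
  exact hgd n x (disjointed_subset g n hx) y (disjointed_subset g n hy)

end ZeroDimensional

theorem exists_nested_partitions {α : Type*} (P : Set α → Prop) (Q : ℕ → Set α → Prop)
    (huniv : P univ)
    (hsplit : ∀ B, P B → ∀ k, ∃ f : ℕ → Set α,
      (∀ n, P (f n)) ∧ ⋃ n, f n = B ∧ Pairwise (Disjoint on f) ∧ ∀ n, Q k (f n)) :
    ∃ A : List ℕ → Set α, (∀ s, P (A s)) ∧ A [] = univ ∧ (∀ s, A s = ⋃ n, A (s ++ [n])) ∧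
      (∀ s n m, n ≠ m → Disjoint (A (s ++ [n])) (A (s ++ [m]))) ∧
      ∀ s n, Q (s.length + 1) (A (s ++ [n])) := by
  choose F hFP hFU hFD hFQ using hsplit
  -- Recursion on the reversed sequence, so that the newest index is the head of the list.
  let G : List ℕ → {B : Set α // P B} := fun s =>
    s.rec ⟨univ, huniv⟩ fun n t B => ⟨F B.1 B.2 (t.length + 1) n, hFP _ _ _ n⟩
  have hstep : ∀ s n, (G (s ++ [n]).reverse).1 =
      F (G s.reverse).1 (G s.reverse).2 (s.length + 1) n := by
    intro s n
    simp only [List.reverse_append, List.reverse_singleton, List.singleton_append]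
    exact congrArg (fun k => F _ _ (k + 1) n) s.length_reverse
  refine ⟨fun s => (G s.reverse).1, fun s => (G s.reverse).2, rfl, fun s => ?_,
    fun s n m hnm => ?_, fun s n => ?_⟩
  · simp only [hstep, hFU]
  · simp only [hstep]
    exact hFD _ _ _ hnm
  · simp only [hstep]
    exact hFQ _ _ _ n

theorem stmt5_general {X : Type*} [MetricSpace X]
    [TopologicalSpace.SeparableSpace X]
    (hzd : TopologicalSpace.IsTopologicalBasis {U : Set X | IsClopen U}) :
    ∃ A : List ℕ → Set X,
      (∀ s, IsClopen (A s)) ∧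
      A [] = Set.univ ∧
      (∀ s, A s = ⋃ n : ℕ, A (s ++ [n])) ∧
      (∀ s, ∀ n m : ℕ, n ≠ m → A (s ++ [n]) ∩ A (s ++ [m]) = ∅) ∧
      (∀ s : List ℕ, s ≠ [] → Metric.diam (A s) ≤ (1 / 2 : ℝ) ^ s.length) := by
  obtain ⟨A, hA, huniv, hunion, hdisj, hdiam⟩ :=
    exists_nested_partitions IsClopen (fun k U => diam U ≤ (1 / 2 : ℝ) ^ k) isClopen_univ
      fun B hB k => exists_clopen_partition_diam_le hzd hB.isOpen (by positivity)
  refine ⟨A, hA, huniv, hunion, fun s n m hnm => (hdisj s n m hnm).inter_eq, fun s hs => ?_⟩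
  obtain ⟨t, n, rfl⟩ := (List.eq_nil_or_concat s).resolve_left hs
  simpa using hdiam t n

/-- A Lusin-scheme decomposition of a zero-dimensional complete separable metric space
with distances bounded by 1: there is a family of clopen sets `A s`, indexed by finite
sequences `s` of naturals, with `A [] = X`, each `A s` partitioned into the `A (s ++ [n])`,
and `diam (A s) ≤ 2 ^ (-length s)` for nonempty `s`. -/
theorem stmt5 {X : Type*} [MetricSpace X] [CompleteSpace X]
    [TopologicalSpace.SeparableSpace X]
    (hzd : TopologicalSpace.IsTopologicalBasis {U : Set X | IsClopen U})
    (hbd : ∀ x y : X, dist x y ≤ 1) :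
    ∃ A : List ℕ → Set X,
      (∀ s, IsClopen (A s)) ∧
      A [] = Set.univ ∧
      (∀ s, A s = ⋃ n : ℕ, A (s ++ [n])) ∧
      (∀ s, ∀ n m : ℕ, n ≠ m → A (s ++ [n]) ∩ A (s ++ [m]) = ∅) ∧
      (∀ s : List ℕ, s ≠ [] → Metric.diam (A s) ≤ (1 / 2 : ℝ) ^ s.length) :=
  stmt5_general hzd
end

section
/- Every zero-dimensional Polish space X is homeomorphic to a closed subset of the Baire space 𝒩; that is, there exists an injective continuous map f : X → 𝒩 such that f '' X is closed in 𝒩 and the inverse map f '' X → X is continuous (equivalently, f is a closed topological embedding). -/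
/-!
Choose, for each `n`, a continuous map `cₙ : X → ℕ` whose fibres have diameter `< 1/(n+1)`:
the clopen sets that are small form an open cover, a countable subcover exists, and making it
disjoint keeps the pieces clopen. The address map `x ↦ (cₙ x)ₙ` is continuous and, since the
fibres shrink, injective. It is also closed: if `y` is adherent to the image of a closed set `K`,
the points of `K` whose addresses agree with `y` in more and more coordinates form a Cauchy
filter, whose limit in `K` has address `y` by completeness.
-/

open Set Filter Topology Metric

open scoped Classical in
theorem exists_continuous_nat_fibers_subset_of_iUnion_eq_univ {X : Type*} [TopologicalSpace X]
    [SecondCountableTopology X] (hX : TopologicalSpace.IsTopologicalBasis {U : Set X | IsClopen U})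
    {ι : Type*} (U : ι → Set X) (hU : ∀ i, IsOpen (U i)) (hcover : ⋃ i, U i = univ) :
    ∃ c : X → ℕ, Continuous c ∧ ∀ x, ∃ i, c ⁻¹' {c x} ⊆ U i := by
  rcases isEmpty_or_nonempty X with _ | ⟨⟨x₀⟩⟩
  · exact ⟨fun _ => 0, continuous_const, isEmptyElim⟩
  set S : Set (Set X) := {V | IsClopen V ∧ ∃ i, V ⊆ U i}
  have hS : ⋃₀ S = univ := by
    refine eq_univ_of_forall fun x => ?_
    obtain ⟨i, hi⟩ := mem_iUnion.1 (hcover.symm ▸ mem_univ x : x ∈ ⋃ i, U i)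
    obtain ⟨V, hV, hxV, hVU⟩ := hX.exists_subset_of_mem_open hi (hU i)
    exact ⟨V, ⟨hV, i, hVU⟩, hxV⟩
  obtain ⟨T, hTc, hTS, hT⟩ := TopologicalSpace.isOpen_sUnion_countable S fun V hV => hV.1.isOpen
  rw [hS] at hT
  have hTne : T.Nonempty := by
    obtain ⟨t, ht, -⟩ : x₀ ∈ ⋃₀ T := hT ▸ mem_univ x₀
    exact ⟨t, ht⟩
  obtain ⟨e, rfl⟩ := hTc.exists_eq_range hTne
  have he : ∀ x, ∃ n, x ∈ e n := fun x => by
    simpa using (hT.symm ▸ mem_univ x : x ∈ ⋃₀ range e)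
  refine ⟨fun x => Nat.find (he x), continuous_discrete_rng.2 fun n => ?_, fun x => ?_⟩
  · have hfiber : (fun x => Nat.find (he x)) ⁻¹' {n} = e n ∩ ⋂ m ∈ Finset.range n, (e m)ᶜ := by
      ext x
      simp [Nat.find_eq_iff]
    rw [hfiber]
    exact (hTS (mem_range_self n)).1.isOpen.inter
      (isOpen_biInter_finset fun m _ => (hTS (mem_range_self m)).1.compl.isOpen)
  · obtain ⟨i, hi⟩ := (hTS (mem_range_self (Nat.find (he x)))).2
    exact ⟨i, fun y (hy : Nat.find (he y) = Nat.find (he x)) => hi (hy ▸ Nat.find_spec (he y))⟩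

theorem exists_continuous_nat_forall_dist_lt {X : Type*} [PseudoMetricSpace X]
    [SecondCountableTopology X] (hX : TopologicalSpace.IsTopologicalBasis {U : Set X | IsClopen U})
    {ε : ℝ} (hε : 0 < ε) : ∃ c : X → ℕ, Continuous c ∧ ∀ x y, c x = c y → dist x y < ε := by
  obtain ⟨c, hc, hsub⟩ := exists_continuous_nat_fibers_subset_of_iUnion_eq_univ hX
    (fun x => ball x (ε / 2)) (fun _ => isOpen_ball)
    (iUnion_eq_univ_iff.2 fun x => ⟨x, mem_ball_self (half_pos hε)⟩)
  refine ⟨c, hc, fun x y hxy => ?_⟩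
  obtain ⟨z, hz⟩ := hsub x
  calc dist x y ≤ dist x z + dist y z := dist_triangle_right _ _ _
    _ < ε / 2 + ε / 2 := add_lt_add (hz rfl) (hz hxy.symm)
    _ = ε := add_halves ε

section AddressMap

variable {X ι : Type*} {Y : ι → Type*} {c : ∀ i, X → Y i}

theorem injective_pi_of_forall_dist_lt [MetricSpace X]
    (hsmall : ∀ ε > 0, ∃ i, ∀ x y, c i x = c i y → dist x y < ε) :
    Function.Injective fun x i => c i x := by
  intro x y hxy
  by_contra hne
  obtain ⟨i, hi⟩ := hsmall (dist x y) (dist_pos.2 hne)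
  exact (hi x y (congr_fun hxy i)).false

variable [∀ i, TopologicalSpace (Y i)] [∀ i, DiscreteTopology (Y i)]

theorem isClosedMap_pi_of_forall_dist_lt [PseudoMetricSpace X] [CompleteSpace X]
    (hc : ∀ i, Continuous (c i)) (hsmall : ∀ ε > 0, ∃ i, ∀ x y, c i x = c i y → dist x y < ε) :
    IsClosedMap fun x i => c i x := by
  intro K hK
  refine isClosed_of_closure_subset fun y hy => ?_
  set F := comap (fun x i => c i x) (𝓝[(fun x i => c i x) '' K] y) ⊓ 𝓟 K
  have hF : F.NeBot := comap_inf_principal_neBot_of_image_mem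
    (mem_closure_iff_nhdsWithin_neBot.1 hy) self_mem_nhdsWithin
  have hcauchy : Cauchy F := by
    refine Metric.cauchy_iff.2 ⟨hF, fun ε hε => ?_⟩
    obtain ⟨i, hi⟩ := hsmall ε hε
    have hcyl : {z : ∀ i, Y i | z i = y i} ∈ 𝓝 y :=
      (isOpen_discrete {y i}).preimage (continuous_apply i) |>.mem_nhds rfl
    exact ⟨_, mem_inf_of_left (preimage_mem_comap (mem_nhdsWithin_of_mem_nhds hcyl)),
      fun x hx x' hx' => hi x x' (hx.trans hx'.symm)⟩
  obtain ⟨z, hz⟩ := CompleteSpace.complete hcauchy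
  have hzK : z ∈ K := hK.mem_of_nhdsWithin_neBot (neBot_of_le (le_inf hz inf_le_right))
  refine ⟨z, hzK, tendsto_nhds_unique (((continuous_pi hc).tendsto z).mono_left hz) ?_⟩
  exact (tendsto_comap.mono_left inf_le_left).mono_right nhdsWithin_le_nhds

theorem isClosedEmbedding_pi_of_forall_dist_lt [MetricSpace X] [CompleteSpace X]
    (hc : ∀ i, Continuous (c i)) (hsmall : ∀ ε > 0, ∃ i, ∀ x y, c i x = c i y → dist x y < ε) :
    IsClosedEmbedding fun x i => c i x :=
  .of_continuous_injective_isClosedMap (continuous_pi hc) (injective_pi_of_forall_dist_lt hsmall)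
    (isClosedMap_pi_of_forall_dist_lt hc hsmall)

end AddressMap

/-- Every zero-dimensional Polish space embeds as a closed subset of the Baire space
`ℕ → ℕ`: there is an injective continuous map with closed range whose inverse is
continuous, i.e. a closed topological embedding. -/
theorem stmt6 {X : Type*} [TopologicalSpace X] [PolishSpace X]
    (hzd : TopologicalSpace.IsTopologicalBasis {U : Set X | IsClopen U}) :
    ∃ f : X → (ℕ → ℕ), Topology.IsClosedEmbedding f := by
  let := TopologicalSpace.upgradeIsCompletelyMetrizable X
  choose c hc hsmall using fun n : ℕ =>
    exists_continuous_nat_forall_dist_lt hzd (Nat.one_div_pos_of_nat (n := n))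
  refine ⟨_, isClosedEmbedding_pi_of_forall_dist_lt hc fun ε hε => ?_⟩
  obtain ⟨n, hn⟩ := exists_nat_one_div_lt hε
  exact ⟨n, fun x y hxy => (hsmall n x y hxy).trans hn⟩
end

section
/- Let A ⊆ 𝒩 and suppose there exist a closed set F ⊆ 𝒩 and a continuous function π : 𝒩 → 𝒩 such that π is injective on F, π '' F = A, and the inverse function from A to F (the map sending each x ∈ A to the unique α ∈ F with π(α) = x) is continuous, where A carries the subspace topology. Then A is a Gδ subset of 𝒩. -/
/-!
The inverse map `g : A → F` is continuous, so `A` lies inside the set of points of `closure A`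
at which `g` has oscillation zero, and this set is a `Gδ` (a countable intersection of open
sets, one for each entourage of a countable basis of the uniformity). Conversely, at such a
point `x` the image under `g` of the trace of `𝓝 x` on `A` is a Cauchy filter on the complete
set `F`, hence converges to some `β ∈ F`; continuity of `π` and `π ∘ g = id` force `π β = x`,
so `x ∈ π '' F ⊆ A`.
-/

open Filter Set Topology Uniformity

section SmallOscillation

variable {X Y : Type*} [TopologicalSpace X] {A : Set X}

def smallOscillationSet (g : A → Y) (V : Set (Y × Y)) : Set X :=
  {x | ∃ U : Set X, IsOpen U ∧ x ∈ U ∧ ∀ a b : A, (a : X) ∈ U → (b : X) ∈ U → (g a, g b) ∈ V}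

theorem isOpen_smallOscillationSet (g : A → Y) (V : Set (Y × Y)) :
    IsOpen (smallOscillationSet g V) := by
  refine isOpen_iff_mem_nhds.2 ?_
  rintro x ⟨U, hU, hxU, hsmall⟩
  filter_upwards [hU.mem_nhds hxU] with y hy
  exact ⟨U, hU, hy, hsmall⟩

theorem smallOscillationSet_mono {g : A → Y} {V W : Set (Y × Y)} (hVW : V ⊆ W) :
    smallOscillationSet g V ⊆ smallOscillationSet g W := by
  rintro x ⟨U, hU, hxU, hsmall⟩
  exact ⟨U, hU, hxU, fun a b ha hb => hVW (hsmall a b ha hb)⟩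

theorem subset_smallOscillationSet [UniformSpace Y] {g : A → Y} (hg : Continuous g)
    {V : Set (Y × Y)} (hV : V ∈ 𝓤 Y) : A ⊆ smallOscillationSet g V := by
  intro x hx
  obtain ⟨W, hWu, hWsymm, hWV⟩ := comp_symm_mem_uniformity_sets hV
  have hball : g ⁻¹' UniformSpace.ball (g ⟨x, hx⟩) W ∈ 𝓝 (⟨x, hx⟩ : A) :=
    hg.continuousAt (UniformSpace.ball_mem_nhds _ hWu)
  rw [nhds_subtype_eq_comap, mem_comap] at hball
  obtain ⟨T, hT, hTsub⟩ := hball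
  refine ⟨interior T, isOpen_interior, mem_interior_iff_mem_nhds.2 hT, fun a b ha hb => ?_⟩
  have hga : g a ∈ UniformSpace.ball (g ⟨x, hx⟩) W := hTsub (interior_subset ha : (a : X) ∈ T)
  have hgb : g b ∈ UniformSpace.ball (g ⟨x, hx⟩) W := hTsub (interior_subset hb : (b : X) ∈ T)
  exact hWV (SetRel.prodMk_mem_comp (SetRel.symm W hga) hgb)

theorem cauchy_map_comap_nhds_of_forall_mem_smallOscillationSet [UniformSpace Y] {g : A → Y}
    {x : X} (hxA : x ∈ closure A) (hx : ∀ V ∈ 𝓤 Y, x ∈ smallOscillationSet g V) :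
    Cauchy (map g (comap ((↑) : A → X) (𝓝 x))) := by
  have := mem_closure_iff_comap_neBot.1 hxA
  refine cauchy_iff.2 ⟨inferInstance, fun V hV => ?_⟩
  obtain ⟨U, hU, hxU, hsmall⟩ := hx V hV
  refine ⟨g '' ((↑) ⁻¹' U), image_mem_map (preimage_mem_comap (hU.mem_nhds hxU)), ?_⟩
  rintro ⟨_, _⟩ ⟨⟨a, ha, rfl⟩, ⟨b, hb, rfl⟩⟩
  exact hsmall a b ha hb

end SmallOscillation

section PartialInverse

variable {X Y : Type*} [TopologicalSpace X] [T2Space X] [UniformSpace Y]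
  {A : Set X} {F : Set Y} {π : Y → X} {g : A → Y}

theorem mem_of_forall_mem_smallOscillationSet (hF : IsComplete F) (hπ : Continuous π)
    (hgF : ∀ a, g a ∈ F) (hπg : ∀ a, π (g a) = a) (him : π '' F ⊆ A) {x : X}
    (hxA : x ∈ closure A) (hx : ∀ V ∈ 𝓤 Y, x ∈ smallOscillationSet g V) : x ∈ A := by
  have := mem_closure_iff_comap_neBot.1 hxA
  have hle : map g (comap ((↑) : A → X) (𝓝 x)) ≤ 𝓟 F :=
    le_principal_iff.2 (mem_map.2 (univ_mem' hgF))
  obtain ⟨β, hβF, hβ⟩ :=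
    hF _ (cauchy_map_comap_nhds_of_forall_mem_smallOscillationSet hxA hx) hle
  have hlim : Tendsto (fun a : A => (a : X)) (comap (↑) (𝓝 x)) (𝓝 (π β)) := by
    simpa only [Function.comp_def, hπg] using (hπ.tendsto β).comp hβ
  rw [← tendsto_nhds_unique hlim tendsto_comap]
  exact him (mem_image_of_mem π hβF)

theorem isGδ_of_continuous_partialInverse [PerfectlyNormalSpace X] [(𝓤 Y).IsCountablyGenerated]
    (hF : IsComplete F) (hπ : Continuous π) (hg : Continuous g) (hgF : ∀ a, g a ∈ F)
    (hπg : ∀ a, π (g a) = a) (him : π '' F ⊆ A) : IsGδ A := by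
  obtain ⟨V, hV⟩ := (𝓤 Y).exists_antitone_basis
  have hA : A = closure A ∩ ⋂ n, smallOscillationSet g (V n) := by
    refine Subset.antisymm (fun x hx => ⟨subset_closure hx, mem_iInter.2 fun n =>
      subset_smallOscillationSet hg (hV.mem n) hx⟩) ?_
    rintro x ⟨hxA, hx⟩
    refine mem_of_forall_mem_smallOscillationSet hF hπ hgF hπg him hxA fun W hW => ?_
    obtain ⟨n, -, hnW⟩ := hV.toHasBasis.mem_iff.1 hW
    exact smallOscillationSet_mono hnW (mem_iInter.1 hx n)
  rw [hA]
  exact isClosed_closure.isGδ.inter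
    (.iInter fun n => (isOpen_smallOscillationSet g (V n)).isGδ)

end PartialInverse

theorem stmt7_general (A F : Set (ℕ → ℕ)) (π : (ℕ → ℕ) → (ℕ → ℕ))
    (hF : IsClosed F) (hπ : Continuous π) (him : π '' F = A)
    (g : A → (ℕ → ℕ)) (hg : ∀ x : A, g x ∈ F ∧ π (g x) = (x : ℕ → ℕ))
    (hgc : Continuous g) :
    IsGδ A :=
  isGδ_of_continuous_partialInverse hF.isComplete hπ hgc (fun x => (hg x).1)
    (fun x => (hg x).2) him.subset

/-- If `A ⊆ ℕ → ℕ` is the image of a closed set `F` under a continuous map `π` that is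
injective on `F`, and the inverse map `A → F` is continuous, then `A` is a `Gδ` set. -/
theorem stmt7 (A F : Set (ℕ → ℕ)) (π : (ℕ → ℕ) → (ℕ → ℕ))
    (hF : IsClosed F) (hπ : Continuous π) (hinj : Set.InjOn π F) (him : π '' F = A)
    (g : A → (ℕ → ℕ)) (hg : ∀ x : A, g x ∈ F ∧ π (g x) = (x : ℕ → ℕ))
    (hgc : Continuous g) :
    IsGδ A :=
  stmt7_general A F π hF hπ him g hg hgc
end

section
/- For a subset A of the Baire space 𝒩, the following are equivalent: (i) A is a Gδ subset of 𝒩; (ii) there exists a closed set F ⊆ 𝒩 × 𝒩 such that for every α ∈ 𝒩, α ∈ A if and only if there exists a β ∈ 𝒩 with (α, β) ∈ F, such β is unique when it exists, and the map from A (with the subspace topology) to 𝒩 sending α ∈ A to the unique β with (α, β) ∈ F is continuous. -/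
open PiNat Set

/-- If two points agree on the first `k` coordinates, their cylinders of length `j ≤ k` agree. -/
lemma cyl_eq_of_agree {α α' : ℕ → ℕ} {k j : ℕ} (h : α' ∈ cylinder α k) (hj : j ≤ k) :
    cylinder α' j = cylinder α j := by
  ext z
  simp only [mem_cylinder_iff] at *
  constructor <;> intro hz i hi <;> rw [hz i hi]
  · exact h i (lt_of_lt_of_le hi hj)
  · exact (h i (lt_of_lt_of_le hi hj)).symm

lemma mem_nhds_cyl {β : ℕ → ℕ} {W : Set (ℕ → ℕ)} (hW : W ∈ nhds β) :
    ∃ m, cylinder β m ⊆ W := by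
  obtain ⟨t, ⟨y, m, rfl⟩, hβt, htW⟩ :=
    (isTopologicalBasis_cylinders (fun _ : ℕ => ℕ)).mem_nhds_iff.1 hW
  exact ⟨m, by rw [mem_cylinder_iff_eq.1 hβt]; exact htW⟩

/-- A subset `A` of the Baire space is `Gδ` if and only if it is the injective projection
of a closed subset `F` of `𝒩 × 𝒩` whose (unique) selection map `A → 𝒩` is continuous. -/
theorem stmt10 (A : Set (ℕ → ℕ)) :
    IsGδ A ↔
      ∃ F : Set ((ℕ → ℕ) × (ℕ → ℕ)),
        IsClosed F ∧
        (∀ α : ℕ → ℕ, α ∈ A ↔ ∃ β : ℕ → ℕ, (α, β) ∈ F) ∧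
        (∀ α β β' : ℕ → ℕ, (α, β) ∈ F → (α, β') ∈ F → β = β') ∧
        ∃ g : A → (ℕ → ℕ), (∀ x : A, ((x : ℕ → ℕ), g x) ∈ F) ∧ Continuous g := by
  classical
  constructor
  · -- forward direction
    intro hA
    obtain ⟨U, hUopen, rfl⟩ := isGδ_iff_eq_iInter_nat.1 hA
    -- the predicate: cylinder of `α` of length `k` is inside `U n`
    set P : ℕ → (ℕ → ℕ) → ℕ → Prop := fun n α k => cylinder α k ⊆ U n with hP
    have hPex : ∀ n α, α ∈ U n → ∃ k, P n α k := by
      intro n α hα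
      obtain ⟨t, ⟨y, k, rfl⟩, hαt, htU⟩ :=
        (isTopologicalBasis_cylinders (fun _ : ℕ => ℕ)).exists_subset_of_mem_open hα (hUopen n)
      refine ⟨k, ?_⟩
      show cylinder α k ⊆ U n
      rw [mem_cylinder_iff_eq.1 hαt]; exact htU
    have hPmem : ∀ n α k, P n α k → α ∈ U n := fun n α k h => h (self_mem_cylinder α k)
    -- `P` depends only on the first `k` coordinates
    have hPagree : ∀ n (α α' : ℕ → ℕ) (k j : ℕ), α' ∈ cylinder α k → j ≤ k →
        (P n α' j ↔ P n α j) := by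
      intro n α α' k j h hj
      show (cylinder α' j ⊆ U n) ↔ (cylinder α j ⊆ U n)
      rw [cyl_eq_of_agree h hj]
    refine ⟨{p | ∀ n, P n p.1 (p.2 n) ∧ ∀ j < p.2 n, ¬ P n p.1 j}, ?_, ?_, ?_, ?_⟩
    · -- closed
      rw [← isOpen_compl_iff]
      rw [isOpen_iff_forall_mem_open]
      rintro ⟨α, β⟩ hp
      simp only [mem_compl_iff, mem_setOf_eq, not_forall] at hp
      obtain ⟨n, hn⟩ := hp
      refine ⟨cylinder α (β n) ×ˢ cylinder β (n + 1), ?_, ?_, ?_⟩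
      · rintro ⟨α', β'⟩ ⟨hα', hβ'⟩ hmem
        have hβn : β' n = β n := mem_cylinder_iff.1 hβ' n (lt_add_one n)
        have := hmem n
        dsimp only at this
        rw [hβn] at this
        apply hn
        refine ⟨(hPagree n α α' (β n) (β n) hα' le_rfl).1 this.1, fun j hj hPj => ?_⟩
        exact this.2 j hj ((hPagree n α α' (β n) j hα' hj.le).2 hPj)
      · exact (isOpen_cylinder _ _ _).prod (isOpen_cylinder _ _ _)
      · exact ⟨self_mem_cylinder _ _, self_mem_cylinder _ _⟩
    · -- projection
      intro α
      simp only [mem_iInter]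
      constructor
      · intro hα
        have hex : ∀ n, ∃ k, P n α k := fun n => hPex n α (hα n)
        refine ⟨fun n => Nat.find (hex n), fun n => ⟨Nat.find_spec (hex n), fun j hj => ?_⟩⟩
        exact Nat.find_min (hex n) hj
      · rintro ⟨β, hβ⟩ n
        exact hPmem n α (β n) (hβ n).1
    · -- uniqueness
      intro α β β' hβ hβ'
      funext n
      rcases lt_trichotomy (β n) (β' n) with h | h | h
      · exact absurd (hβ n).1 ((hβ' n).2 _ h)
      · exact h
      · exact absurd (hβ' n).1 ((hβ n).2 _ h)
    · -- continuous selection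
      have hex : ∀ (x : (⋂ n, U n : Set (ℕ → ℕ))) (n : ℕ), ∃ k, P n x.1 k := by
        intro x n
        exact hPex n x.1 (mem_iInter.1 x.2 n)
      refine ⟨fun x n => Nat.find (hex x n), ?_, ?_⟩
      · intro x n
        exact ⟨Nat.find_spec (hex x n), fun j hj => Nat.find_min (hex x n) hj⟩
      · apply continuous_pi
        intro n
        apply IsLocallyConstant.continuous
        rw [IsLocallyConstant.iff_exists_open]
        intro x
        refine ⟨Subtype.val ⁻¹' cylinder x.1 (Nat.find (hex x n)), ?_, self_mem_cylinder _ _, ?_⟩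
        · exact (isOpen_cylinder _ _ _).preimage continuous_subtype_val
        · intro y hy
          have hagree : ∀ j ≤ Nat.find (hex x n), (P n y.1 j ↔ P n x.1 j) :=
            fun j hj => hPagree n x.1 y.1 _ j hy hj
          have h1 : Nat.find (hex y n) ≤ Nat.find (hex x n) :=
            Nat.find_le ((hagree _ le_rfl).2 (Nat.find_spec (hex x n)))
          refine le_antisymm h1 (Nat.find_le ?_)
          exact (hagree _ h1).1 (Nat.find_spec (hex y n))
  · -- reverse direction
    rintro ⟨F, hFclosed, hproj, -, g, hgF, hgc⟩
    set W : ℕ → Set (ℕ → ℕ) := fun n =>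
      {α | ∃ V : Set (ℕ → ℕ), IsOpen V ∧ α ∈ V ∧ ∃ y, ∀ x : A, (x : ℕ → ℕ) ∈ V → g x n = y}
      with hW
    have hWopen : ∀ n, IsOpen (W n) := by
      intro n
      rw [isOpen_iff_forall_mem_open]
      rintro α ⟨V, hV, hαV, y, hy⟩
      exact ⟨V, fun α' hα' => ⟨V, hV, hα', y, hy⟩, hV, hαV⟩
    have key : A = closure A ∩ ⋂ n, W n := by
      apply Subset.antisymm
      · intro α hα
        refine ⟨subset_closure hα, mem_iInter.2 fun n => ?_⟩
        -- continuity of the n-th coordinate of g at ⟨α, hα⟩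
        have hcn : Continuous fun x : A => g x n := (continuous_apply n).comp hgc
        have : IsOpen ((fun x : A => g x n) ⁻¹' {g ⟨α, hα⟩ n}) :=
          (isOpen_discrete _).preimage hcn
        rw [isOpen_induced_iff] at this
        obtain ⟨V, hV, hVeq⟩ := this
        refine ⟨V, hV, ?_, g ⟨α, hα⟩ n, ?_⟩
        · have : (⟨α, hα⟩ : A) ∈ Subtype.val ⁻¹' V := by
            rw [hVeq]; exact rfl
          exact this
        · intro x hx
          have : x ∈ Subtype.val ⁻¹' V := hx
          rw [hVeq] at this
          exact this
      · rintro α ⟨hαcl, hαW⟩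
        rw [mem_iInter] at hαW
        choose V hVopen hαV y hy using hαW
        rw [hproj]
        refine ⟨y, ?_⟩
        have : (α, y) ∈ closure F := by
          rw [mem_closure_iff_nhds]
          intro t ht
          rw [nhds_prod_eq, Filter.mem_prod_iff] at ht
          obtain ⟨V', hV', Wset, hWset, hsub⟩ := ht
          obtain ⟨m, hm⟩ := mem_nhds_cyl hWset
          have hN : V' ∩ ⋂ i ∈ Finset.range m, V i ∈ nhds α := by
            apply Filter.inter_mem hV'
            apply (Finset.range m).iInter_mem_sets.2
            intro i _
            exact (hVopen i).mem_nhds (hαV i)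
          obtain ⟨x, hxN, hxA⟩ := mem_closure_iff_nhds.1 hαcl _ hN
          refine ⟨(x, g ⟨x, hxA⟩), hsub ⟨hxN.1, hm ?_⟩, hgF ⟨x, hxA⟩⟩
          rw [mem_cylinder_iff]
          intro i hi
          have hxVi : x ∈ V i := by
            have := hxN.2
            simp only [Finset.mem_range, mem_iInter] at this
            exact this i hi
          exact hy i ⟨x, hxA⟩ hxVi
        rwa [hFclosed.closure_eq] at this
    rw [key]
    letI : MetricSpace (ℕ → ℕ) := PiNat.metricSpaceNatNat
    exact (isClosed_closure.isGδ).inter (IsGδ.iInter_of_isOpen hWopen)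
end
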